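/- If Y is a strictly convex Banach space and T : c₀ → Y is a bounded operator attaining its norm at some x ∈ S_{c₀}, then T has finite rank (indeed T is determined by finitely many coordinates); consequently the formal identity from c₀ into an equivalent strictly convex renorming of c₀ cannot be approximated in operator norm by norm-attaining operators. -/

import Mathlib

open ZeroAtInfty

namespace LindenstraussAux

/-- The standard basis vector `e n` in `c₀`. -/
def e (n : ℕ) : C₀(ℕ, ℝ) :=
  ⟨⟨Pi.single n 1, continuous_of_discreteTopology⟩, by
    rw [Filter.cocompact_eq_cofinite ℕ]
    refine tendsto_const_nhds.congr' ?_
    filter_upwards [Set.Finite.eventually_cofinite_notMem (Set.finite_singleton n)] with m hm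
    simp only [Set.mem_singleton_iff] at hm
    simp [Pi.single_eq_of_ne hm]⟩

lemma e_apply (n m : ℕ) : e n m = (Pi.single n (1:ℝ) : ℕ → ℝ) m := rfl

lemma abs_apply_le_norm (f : C₀(ℕ, ℝ)) (m : ℕ) : |f m| ≤ ‖f‖ := by
  have h1 : |f m| = ‖f.toBCF m‖ := rfl
  rw [h1, ← ZeroAtInftyContinuousMap.norm_toBCF_eq_norm]
  exact BoundedContinuousFunction.norm_coe_le_norm _ m

lemma norm_le_of_forall {f : C₀(ℕ, ℝ)} {C : ℝ} (hC : 0 ≤ C) (h : ∀ m, |f m| ≤ C) : ‖f‖ ≤ C := by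
  rw [← ZeroAtInftyContinuousMap.norm_toBCF_eq_norm]
  exact (BoundedContinuousFunction.norm_le hC).2 fun m => h m

lemma norm_e (n : ℕ) : ‖e n‖ = 1 := by
  refine le_antisymm (norm_le_of_forall zero_le_one fun m => ?_) ?_
  · rw [e_apply]
    rcases eq_or_ne m n with rfl | h
    · simp
    · simp [Pi.single_eq_of_ne h]
  · have := abs_apply_le_norm (e n) n
    rwa [e_apply, Pi.single_eq_same, abs_one] at this

lemma sum_apply {ι : Type*} (s : Finset ι) (g : ι → C₀(ℕ, ℝ)) (m : ℕ) :
    (∑ i ∈ s, g i) m = ∑ i ∈ s, g i m := by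
  classical
  induction s using Finset.cons_induction with
  | empty => simp [ZeroAtInftyContinuousMap.coe_zero]
  | cons a s ha ih =>
      rw [Finset.sum_cons, Finset.sum_cons, ZeroAtInftyContinuousMap.add_apply, ih]

end LindenstraussAux

namespace LindenstraussAux

variable {Y : Type*} [NormedAddCommGroup Y] [NormedSpace ℝ Y] [StrictConvexSpace ℝ Y]

lemma key (T : C₀(ℕ, ℝ) →L[ℝ] Y) (x : C₀(ℕ, ℝ)) (hx : ‖x‖ = 1) (hTx : ‖T x‖ = ‖T‖) :
    ∃ N : ℕ, ∀ u : C₀(ℕ, ℝ), (∀ n ≤ N, u n = 0) → T u = 0 := by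
  by_cases hT0 : T = 0
  · exact ⟨0, fun u _ => by simp [hT0]⟩
  have hTpos : 0 < ‖T‖ := by
    rcases (norm_nonneg T).lt_or_eq with h | h
    · exact h
    · exact absurd ((ContinuousLinearMap.opNorm_zero_iff T).1 h.symm) hT0
  -- find N with |x n| < 1/2 beyond N
  have hten : Filter.Tendsto (⇑x) Filter.atTop (nhds 0) := by
    have := ZeroAtInftyContinuousMap.zero_at_infty' x
    rwa [Filter.cocompact_eq_cofinite, Nat.cofinite_eq_atTop] at this
  have hev : ∀ᶠ n in Filter.atTop, |x n| < 1/2 := by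
    have := (Metric.tendsto_nhds.1 hten) (1/2) (by norm_num)
    filter_upwards [this] with n hn
    rwa [Real.dist_0_eq_abs] at hn
  obtain ⟨N, hNx⟩ := Filter.eventually_atTop.1 hev
  refine ⟨N, fun u hu => ?_⟩
  -- small case
  have small : ∀ u : C₀(ℕ, ℝ), (∀ n ≤ N, u n = 0) → ‖u‖ ≤ 1/2 → T u = 0 := by
    intro u hu hnu
    have hbound : ∀ (s : ℝ), |s| = 1 → ‖x + s • u‖ ≤ 1 := by
      intro s hs
      refine norm_le_of_forall zero_le_one fun m => ?_
      rw [ZeroAtInftyContinuousMap.add_apply, ZeroAtInftyContinuousMap.smul_apply]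
      rcases le_or_gt m N with hm | hm
      · rw [hu m hm]
        simpa using (abs_apply_le_norm x m).trans hx.le
      · have h1 : |x m| < 1/2 := hNx m hm.le
        have h2 : |s • u m| ≤ 1/2 := by
          rw [smul_eq_mul, abs_mul, hs, one_mul]
          exact (abs_apply_le_norm u m).trans hnu
        calc |x m + s • u m| ≤ |x m| + |s • u m| := abs_add_le _ _
          _ ≤ 1/2 + 1/2 := by linarith
          _ = 1 := by norm_num
    have ha : ‖T (x + u)‖ ≤ ‖T‖ := by
      calc ‖T (x + u)‖ ≤ ‖T‖ * ‖x + u‖ := T.le_opNorm _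
        _ ≤ ‖T‖ * 1 :=
            mul_le_mul_of_nonneg_left (by simpa using hbound 1 (by norm_num)) (norm_nonneg T)
        _ = ‖T‖ := mul_one _
    have hb : ‖T (x - u)‖ ≤ ‖T‖ := by
      calc ‖T (x - u)‖ ≤ ‖T‖ * ‖x - u‖ := T.le_opNorm _
        _ ≤ ‖T‖ * 1 := by
            have := hbound (-1) (by norm_num)
            have h' : x + (-1 : ℝ) • u = x - u := by module
            rw [h'] at this
            exact mul_le_mul_of_nonneg_left this (norm_nonneg T)
        _ = ‖T‖ := mul_one _
    by_contra hne0
    have hne : T (x + u) ≠ T (x - u) := by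
      intro h
      apply hne0
      have : T (x + u) - T (x - u) = (2 : ℝ) • T u := by
        rw [← map_sub, ← map_smul]
        congr 1
        module
      rw [h, sub_self] at this
      have h2 : ((2:ℝ))⁻¹ • ((2:ℝ) • T u) = ((2:ℝ))⁻¹ • (0 : Y) := by rw [← this]
      simpa [smul_smul] using h2
    have hcombo := norm_combo_lt_of_ne ha hb hne (by norm_num : (0:ℝ) < 1/2)
      (by norm_num : (0:ℝ) < 1/2) (by norm_num)
    have heq : (1/2 : ℝ) • T (x + u) + (1/2 : ℝ) • T (x - u) = T x := by
      rw [← map_smul, ← map_smul, ← map_add]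
      congr 1
      module
    rw [heq, hTx] at hcombo
    exact lt_irrefl _ hcombo
  -- general case by scaling
  rcases eq_or_ne u 0 with rfl | hu0
  · simp
  have hc : 0 < ‖u‖ := norm_pos_iff.2 hu0
  set v : C₀(ℕ, ℝ) := ((2 * ‖u‖)⁻¹ : ℝ) • u with hv
  have hvz : ∀ n ≤ N, v n = 0 := fun n hn => by
    rw [hv, ZeroAtInftyContinuousMap.smul_apply, hu n hn, smul_zero]
  have hvn : ‖v‖ ≤ 1/2 := by
    refine norm_le_of_forall (by norm_num) fun m => ?_
    rw [hv, ZeroAtInftyContinuousMap.smul_apply, smul_eq_mul, abs_mul,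
      abs_of_pos (by positivity : (0:ℝ) < (2 * ‖u‖)⁻¹)]
    calc (2 * ‖u‖)⁻¹ * |u m| ≤ (2 * ‖u‖)⁻¹ * ‖u‖ :=
          mul_le_mul_of_nonneg_left (abs_apply_le_norm u m) (by positivity)
      _ = 1/2 := by field_simp

  have hTv : T v = 0 := small v hvz hvn
  have : T u = (2 * ‖u‖ : ℝ) • T v := by
    rw [← map_smul, hv, smul_smul, mul_inv_cancel₀ (by positivity), one_smul]
  rw [this, hTv, smul_zero]

end LindenstraussAux

/-- Lindenstrauss's observation: if `Y` is strictly convex and `T : c₀ → Y` attains its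
operator norm at some point of the unit sphere, then `T` is determined by finitely many
coordinates (hence has finite rank); consequently the formal identity from `c₀` onto an
equivalent strictly convex renorming of `c₀` cannot be approximated in operator norm by
norm-attaining operators. -/
theorem norm_attaining_into_strictConvex_finite_rank
    (Y : Type*) [NormedAddCommGroup Y] [NormedSpace ℝ Y] [StrictConvexSpace ℝ Y] :
    (∀ (T : C₀(ℕ, ℝ) →L[ℝ] Y) (x : C₀(ℕ, ℝ)), ‖x‖ = 1 → ‖T x‖ = ‖T‖ →
      (∃ N : ℕ, ∀ y z : C₀(ℕ, ℝ), (∀ n ≤ N, y n = z n) → T y = T z)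
      ∧ FiniteDimensional ℝ (LinearMap.range (T : C₀(ℕ, ℝ) →ₗ[ℝ] Y)))
    ∧ ∀ J : C₀(ℕ, ℝ) ≃L[ℝ] Y,
        ¬ ∀ δ : ℝ, 0 < δ →
          ∃ T : C₀(ℕ, ℝ) →L[ℝ] Y,
            (∃ x : C₀(ℕ, ℝ), ‖x‖ = 1 ∧ ‖T x‖ = ‖T‖) ∧
            ‖T - (J : C₀(ℕ, ℝ) →L[ℝ] Y)‖ < δ := by
  have main : ∀ (T : C₀(ℕ, ℝ) →L[ℝ] Y) (x : C₀(ℕ, ℝ)), ‖x‖ = 1 → ‖T x‖ = ‖T‖ →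
      (∃ N : ℕ, ∀ y z : C₀(ℕ, ℝ), (∀ n ≤ N, y n = z n) → T y = T z)
      ∧ FiniteDimensional ℝ (LinearMap.range (T : C₀(ℕ, ℝ) →ₗ[ℝ] Y)) := by
    intro T x hx hTx
    obtain ⟨N, hN⟩ := LindenstraussAux.key T x hx hTx
    have hdet : ∀ y z : C₀(ℕ, ℝ), (∀ n ≤ N, y n = z n) → T y = T z := by
      intro y z h
      have h0 : T (y - z) = 0 := hN (y - z) fun n hn => by
        rw [ZeroAtInftyContinuousMap.sub_apply, h n hn, sub_self]
      rw [map_sub, sub_eq_zero] at h0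
      exact h0
    refine ⟨⟨N, hdet⟩, ?_⟩
    set S : Submodule ℝ C₀(ℕ, ℝ) :=
      Submodule.span ℝ (Set.range fun i : Fin (N+1) => LindenstraussAux.e i) with hS
    haveI : FiniteDimensional ℝ S := FiniteDimensional.span_of_finite ℝ (Set.finite_range _)
    haveI : FiniteDimensional ℝ (S.map (T : C₀(ℕ, ℝ) →ₗ[ℝ] Y)) := Module.Finite.map S _
    have hle : LinearMap.range (T : C₀(ℕ, ℝ) →ₗ[ℝ] Y) ≤ S.map (T : C₀(ℕ, ℝ) →ₗ[ℝ] Y) := by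
      rintro y ⟨w, rfl⟩
      refine ⟨∑ i ∈ Finset.range (N+1), w i • LindenstraussAux.e i, ?_, ?_⟩
      · refine Submodule.sum_mem _ fun i hi => Submodule.smul_mem _ _ ?_
        have hi' : i < N + 1 := Finset.mem_range.1 hi
        exact Submodule.subset_span ⟨⟨i, hi'⟩, rfl⟩
      · show T _ = T w
        refine hdet _ _ fun n hn => ?_
        rw [LindenstraussAux.sum_apply]
        rw [Finset.sum_eq_single n]
        · rw [ZeroAtInftyContinuousMap.smul_apply, LindenstraussAux.e_apply,
            Pi.single_eq_same, smul_eq_mul, mul_one]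
        · intro i _ hin
          rw [ZeroAtInftyContinuousMap.smul_apply, LindenstraussAux.e_apply,
            Pi.single_eq_of_ne (Ne.symm hin), smul_zero]
        · intro hnot
          exact absurd (Finset.mem_range.2 (Nat.lt_succ_of_le hn)) hnot
    exact Submodule.finiteDimensional_of_le hle
  refine ⟨main, ?_⟩
  intro J h
  set Js : Y →L[ℝ] C₀(ℕ, ℝ) := (J.symm : Y →L[ℝ] C₀(ℕ, ℝ)) with hJs
  have hJspos : 0 < ‖Js‖ := by
    rcases (norm_nonneg Js).lt_or_eq with h' | h'
    · exact h'
    · exfalso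
      have h0 : Js = 0 := (ContinuousLinearMap.opNorm_zero_iff Js).1 h'.symm
      have : LindenstraussAux.e 0 = 0 := by
        have := J.symm_apply_apply (LindenstraussAux.e 0)
        rw [show J.symm (J (LindenstraussAux.e 0)) = Js (J (LindenstraussAux.e 0)) from rfl,
          h0] at this
        simpa using this.symm
      rw [← norm_eq_zero] at this
      rw [LindenstraussAux.norm_e 0] at this
      norm_num at this
  obtain ⟨T, ⟨x, hx, hTx⟩, hclose⟩ := h (‖Js‖⁻¹) (by positivity)
  obtain ⟨⟨N, hN⟩, -⟩ := main T x hx hTx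
  set v : C₀(ℕ, ℝ) := LindenstraussAux.e (N+1) with hv
  have hTv : T v = 0 := by
    have : T v = T 0 := hN v 0 fun n hn => by
      rw [hv, LindenstraussAux.e_apply, Pi.single_eq_of_ne (by omega : n ≠ N + 1),
        ZeroAtInftyContinuousMap.coe_zero]
      rfl
    rw [this, map_zero]
  have hub : ‖J v‖ < ‖Js‖⁻¹ := by
    have h1 : ‖(T - (J : C₀(ℕ, ℝ) →L[ℝ] Y)) v‖ ≤ ‖T - (J : C₀(ℕ, ℝ) →L[ℝ] Y)‖ * ‖v‖ :=
      ContinuousLinearMap.le_opNorm _ _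
    rw [ContinuousLinearMap.sub_apply, hTv, zero_sub, norm_neg, hv,
      LindenstraussAux.norm_e, mul_one] at h1
    exact lt_of_le_of_lt h1 hclose
  have hlb : ‖Js‖⁻¹ ≤ ‖J v‖ := by
    have h1 : (1 : ℝ) ≤ ‖Js‖ * ‖J v‖ := by
      have h2 : ‖Js (J v)‖ ≤ ‖Js‖ * ‖J v‖ := ContinuousLinearMap.le_opNorm _ _
      have h3 : Js (J v) = v := J.symm_apply_apply v
      rw [h3, hv, LindenstraussAux.norm_e] at h2
      exact h2
    rw [inv_eq_one_div, div_le_iff₀ hJspos, mul_comm]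
    exact h1
  exact absurd (lt_of_le_of_lt hlb hub) (lt_irrefl _)
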